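/- Let n ≥ 2 be an integer, K a field, R_n the rose graph with n petals, and u a unit of the degree-zero component L_K(R_n)_0 such that u^{-1} = f_u(w) for some unit w of L_K(R_n)_0 (so f_u is a graded automorphism). Set P := (e_i* u e_j)_{1 ≤ i,j ≤ n} ∈ GL_n(L_K(R_n)_0), and for m ≥ 1 define u_m := f_u^{m-1}(u) ⋯ f_u(u) u and P_m := P f_u(P) ⋯ f_u^{m-1}(P). Then P_m = (e_i* u_m e_j)_{1 ≤ i,j ≤ n} and P_m^{-1} = (e_i* u_m^{-1} e_j)_{1 ≤ i,j ≤ n} for all m ≥ 1. -/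

import Mathlib

/-- Generators of the Leavitt path algebra of the rose with `n` petals:
the edges `e_1, …, e_n` and the ghost edges `e_1*, …, e_n*` (the single vertex `v` is the
identity `1`). -/
inductive RGen (n : ℕ) : Type
  | e : Fin n → RGen n
  | g : Fin n → RGen n

/-- The defining relations of `L_K(R_n)`: `e_i* e_j = δ_{ij} v` and `Σ_i e_i e_i* = v`,
where `v = 1`. -/
inductive RoseRel (K : Type) [Field K] (n : ℕ) :
    FreeAlgebra K (RGen n) → FreeAlgebra K (RGen n) → Prop
  | ghostEdgeSame (i : Fin n) :
      RoseRel K n (FreeAlgebra.ι K (RGen.g i) * FreeAlgebra.ι K (RGen.e i)) 1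
  | ghostEdgeNe (i j : Fin n) (h : i ≠ j) :
      RoseRel K n (FreeAlgebra.ι K (RGen.g i) * FreeAlgebra.ι K (RGen.e j)) 0
  | ck2 :
      RoseRel K n (∑ i : Fin n, FreeAlgebra.ι K (RGen.e i) * FreeAlgebra.ι K (RGen.g i)) 1

/-- The Leavitt path algebra `L_K(R_n)` of the rose with `n` petals. -/
abbrev LRose (K : Type) [Field K] (n : ℕ) : Type := RingQuot (RoseRel K n)

/-- The edge `e_i` as an element of `L_K(R_n)`. -/
noncomputable def ee (K : Type) [Field K] (n : ℕ) (i : Fin n) : LRose K n :=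
  RingQuot.mkAlgHom K (RoseRel K n) (FreeAlgebra.ι K (RGen.e i))

/-- The ghost edge `e_i*` as an element of `L_K(R_n)`. -/
noncomputable def gg (K : Type) [Field K] (n : ℕ) (i : Fin n) : LRose K n :=
  RingQuot.mkAlgHom K (RoseRel K n) (FreeAlgebra.ι K (RGen.g i))

/-- The degree `d` component of the ℤ-grading of `L_K(R_n)`: the `K`-span of the
elements `p q*` with `|p| - |q| = d`. -/
noncomputable def rComponent (K : Type) [Field K] (n : ℕ) (d : ℤ) :
    Submodule K (LRose K n) :=
  Submodule.span K {x : LRose K n | ∃ p q : List (Fin n),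
    (p.length : ℤ) - (q.length : ℤ) = d ∧
    x = (p.map (ee K n)).prod * (q.reverse.map (gg K n)).prod}

/-- A map is graded when it preserves every homogeneous component. -/
def RGraded (K : Type) [Field K] (n : ℕ) (f : LRose K n → LRose K n) : Prop :=
  ∀ d : ℤ, ∀ x ∈ rComponent K n d, f x ∈ rComponent K n d

/-- The defining property of the endomorphism `φ_P` of `L_K(R_n)` attached to a matrix
`P` with inverse `P'`: it sends `e_i ↦ Σ_k e_k p_{k i}` and `e_i* ↦ Σ_k p'_{i k} e_k*`
(and `v = 1 ↦ 1` automatically). -/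
def RPhiProps (K : Type) [Field K] (n : ℕ) (P P' : Matrix (Fin n) (Fin n) (LRose K n))
    (φ : LRose K n →ₐ[K] LRose K n) : Prop :=
  (∀ i, φ (ee K n i) = ∑ k, ee K n k * P k i) ∧
  (∀ i, φ (gg K n i) = ∑ k, P' i k * gg K n k)

/-!
The map `x ↦ (e_i* x e_j)_{i,j}` is a unital ring homomorphism `L_K(R_n) → M_n(L_K(R_n))`,
because `e_i* e_j = δ_{ij}` and `Σ_k e_k e_k* = 1`. Iterating `f_u` gives
`f_u^m(e_j) = u_m e_j` and `f_u^m(e_i*) = e_i* u_m^{-1}`, so `f_u^m(P)` is the image of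
`u_m^{-1} f_u^m(u) u_m`. By multiplicativity, `P_m f_u^m(P)` is then the image of
`f_u^m(u) u_m = u_{m+1}`, and `P_m^{-1}` is the image of `u_m^{-1}`.
-/

section Iterate

variable {M F : Type*} [Monoid M] [FunLike F M M] [MonoidHomClass F M M] (f : F)

theorem iterate_map_eq_mul_left {x u : M} (hx : f x = u * x) (U : ℕ → M) (hU1 : U 1 = u)
    (hUS : ∀ m, 1 ≤ m → U (m + 1) = f^[m] u * U m) :
    ∀ m, 1 ≤ m → f^[m] x = U m * x := by
  intro m hm
  induction m, hm using Nat.le_induction with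
  | base => simp [hx, hU1]
  | succ m hm ih =>
    rw [Function.iterate_succ_apply, hx, iterate_map_mul, ih, hUS m hm, mul_assoc]

theorem iterate_map_eq_mul_right {x u : M} (hx : f x = x * u) (U : ℕ → M) (hU1 : U 1 = u)
    (hUS : ∀ m, 1 ≤ m → U (m + 1) = U m * f^[m] u) :
    ∀ m, 1 ≤ m → f^[m] x = x * U m := by
  intro m hm
  induction m, hm using Nat.le_induction with
  | base => simp [hx, hU1]
  | succ m hm ih =>
    rw [Function.iterate_succ_apply, hx, iterate_map_mul, ih, hUS m hm, mul_assoc]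

theorem iterate_mul_eq_one {u u' : M} (h : u * u' = 1) (m : ℕ) : f^[m] u * f^[m] u' = 1 := by
  rw [← iterate_map_mul, h, iterate_map_one]

theorem iterate_products_mul_eq_one {u u' : M} (huu' : u * u' = 1) (hu'u : u' * u = 1)
    (U U' : ℕ → M) (hU1 : U 1 = u) (hUS : ∀ m, 1 ≤ m → U (m + 1) = f^[m] u * U m)
    (hU'1 : U' 1 = u') (hU'S : ∀ m, 1 ≤ m → U' (m + 1) = U' m * f^[m] u') :
    ∀ m, 1 ≤ m → U m * U' m = 1 ∧ U' m * U m = 1 := by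
  intro m hm
  induction m, hm using Nat.le_induction with
  | base => exact ⟨by rw [hU1, hU'1, huu'], by rw [hU1, hU'1, hu'u]⟩
  | succ m hm ih =>
    rw [hUS m hm, hU'S m hm]
    constructor
    · calc f^[m] u * U m * (U' m * f^[m] u') = f^[m] u * (U m * U' m) * f^[m] u' := by
            simp only [mul_assoc]
        _ = 1 := by rw [ih.1, mul_one, iterate_mul_eq_one f huu']
    · calc U' m * f^[m] u' * (f^[m] u * U m) = U' m * (f^[m] u' * f^[m] u) * U m := by
            simp only [mul_assoc]
        _ = 1 := by rw [iterate_mul_eq_one f hu'u, mul_one, ih.2]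

end Iterate

namespace LRose

variable (K : Type) [Field K] (n : ℕ)

theorem gg_mul_ee (i j : Fin n) : gg K n i * ee K n j = if i = j then 1 else 0 := by
  simp only [gg, ee, ← map_mul]
  split_ifs with h
  · subst h
    rw [RingQuot.mkAlgHom_rel K (RoseRel.ghostEdgeSame i), map_one]
  · rw [RingQuot.mkAlgHom_rel K (RoseRel.ghostEdgeNe i j h), map_zero]

theorem sum_ee_mul_gg : ∑ i : Fin n, ee K n i * gg K n i = 1 := by
  simp only [ee, gg, ← map_mul, ← map_sum]
  rw [RingQuot.mkAlgHom_rel K RoseRel.ck2, map_one]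

noncomputable def toMatrix : LRose K n →+* Matrix (Fin n) (Fin n) (LRose K n) where
  toFun x := Matrix.of fun i j => gg K n i * x * ee K n j
  map_one' := by
    ext i j
    simp [Matrix.one_apply, gg_mul_ee]
  map_mul' x y := by
    ext i j
    simp only [Matrix.mul_apply, Matrix.of_apply]
    calc gg K n i * (x * y) * ee K n j
        = gg K n i * x * (∑ k, ee K n k * gg K n k) * (y * ee K n j) := by
          rw [sum_ee_mul_gg, mul_one]; noncomm_ring
      _ = ∑ k, gg K n i * x * ee K n k * (gg K n k * y * ee K n j) := by
          simp only [Finset.mul_sum, Finset.sum_mul, mul_assoc]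
  map_zero' := by
    ext i j
    simp
  map_add' x y := by
    ext i j
    simp [mul_add, add_mul]

theorem toMatrix_apply (x : LRose K n) :
    toMatrix K n x = Matrix.of fun i j => gg K n i * x * ee K n j := rfl

variable {K n}

theorem toMatrix_map_iterate {F : Type*} [FunLike F (LRose K n) (LRose K n)]
    [MonoidHomClass F (LRose K n) (LRose K n)] (f : F) (m : ℕ) {U U' : LRose K n}
    (he : ∀ j, f^[m] (ee K n j) = U * ee K n j) (hg : ∀ i, f^[m] (gg K n i) = gg K n i * U')
    (x : LRose K n) :
    (toMatrix K n x).map f^[m] = toMatrix K n (U' * f^[m] x * U) := by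
  ext i j
  simp only [toMatrix_apply, Matrix.map_apply, Matrix.of_apply, iterate_map_mul, he, hg,
    mul_assoc]

end LRose

open LRose in
theorem stmt17_general (K : Type) [Field K] (n : ℕ)
    (u u' : LRose K n)
    (huu' : u * u' = 1) (hu'u : u' * u = 1)
    (fu : LRose K n →ₐ[K] LRose K n)
    (hfue : ∀ i, fu (ee K n i) = u * ee K n i)
    (hfug : ∀ i, fu (gg K n i) = gg K n i * u')
    (um um' : ℕ → LRose K n)
    (hum1 : um 1 = u) (humS : ∀ m, 1 ≤ m → um (m + 1) = (⇑fu)^[m] u * um m)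
    (hum'1 : um' 1 = u') (hum'S : ∀ m, 1 ≤ m → um' (m + 1) = um' m * (⇑fu)^[m] u')
    (Pm : ℕ → Matrix (Fin n) (Fin n) (LRose K n))
    (hPm1 : Pm 1 = Matrix.of fun i j => gg K n i * u * ee K n j)
    (hPmS : ∀ m, 1 ≤ m →
      Pm (m + 1) = Pm m * (Matrix.of fun i j => gg K n i * u * ee K n j).map ((⇑fu)^[m])) :
    ∀ m, 1 ≤ m →
      Pm m = (Matrix.of fun i j => gg K n i * um m * ee K n j) ∧
      Pm m * (Matrix.of fun i j => gg K n i * um' m * ee K n j) = 1 ∧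
      (Matrix.of fun i j => gg K n i * um' m * ee K n j) * Pm m = 1 := by
  have hinv := iterate_products_mul_eq_one fu huu' hu'u um um' hum1 humS hum'1 hum'S
  have hPm : ∀ m, 1 ≤ m → Pm m = toMatrix K n (um m) := by
    intro m hm
    induction m, hm using Nat.le_induction with
    | base => rw [hPm1, hum1, toMatrix_apply]
    | succ m hm ih =>
      have hmap := toMatrix_map_iterate fu m
        (fun j => iterate_map_eq_mul_left fu (hfue j) um hum1 humS m hm)
        (fun i => iterate_map_eq_mul_right fu (hfug i) um' hum'1 hum'S m hm) u
      calc Pm (m + 1) = toMatrix K n (um m) * toMatrix K n (um' m * (⇑fu)^[m] u * um m) := by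
            rw [hPmS m hm, ih, ← toMatrix_apply, hmap]
        _ = toMatrix K n (um (m + 1)) := by
            rw [← map_mul, ← mul_assoc, ← mul_assoc, (hinv m hm).1, one_mul, humS m hm]
  intro m hm
  simp only [← toMatrix_apply, hPm m hm, ← map_mul, (hinv m hm).1, (hinv m hm).2, map_one,
    and_self]

/-- Let `u` be a unit of `L_K(R_n)_0` with `u^{-1} = f_u(w)` for some
unit `w` of `L_K(R_n)_0`, let `P = (e_i* u e_j)`, and set
`u_m = f_u^{m-1}(u) ⋯ f_u(u) u` and `P_m = P f_u(P) ⋯ f_u^{m-1}(P)`.  Then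
`P_m = (e_i* u_m e_j)` and `P_m^{-1} = (e_i* u_m^{-1} e_j)` for all `m ≥ 1`. -/
theorem stmt17 (K : Type) [Field K] (n : ℕ) (hn : 2 ≤ n)
    (u u' : LRose K n) (hu0 : u ∈ rComponent K n 0) (hu'0 : u' ∈ rComponent K n 0)
    (huu' : u * u' = 1) (hu'u : u' * u = 1)
    (fu : LRose K n →ₐ[K] LRose K n)
    (hfue : ∀ i, fu (ee K n i) = u * ee K n i)
    (hfug : ∀ i, fu (gg K n i) = gg K n i * u')
    (w w' : LRose K n) (hw0 : w ∈ rComponent K n 0) (hw'0 : w' ∈ rComponent K n 0)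
    (hww' : w * w' = 1) (hw'w : w' * w = 1) (hw : u' = fu w)
    (um um' : ℕ → LRose K n)
    (hum1 : um 1 = u) (humS : ∀ m, 1 ≤ m → um (m + 1) = (⇑fu)^[m] u * um m)
    (hum'1 : um' 1 = u') (hum'S : ∀ m, 1 ≤ m → um' (m + 1) = um' m * (⇑fu)^[m] u')
    (Pm : ℕ → Matrix (Fin n) (Fin n) (LRose K n))
    (hPm1 : Pm 1 = Matrix.of fun i j => gg K n i * u * ee K n j)
    (hPmS : ∀ m, 1 ≤ m →
      Pm (m + 1) = Pm m * (Matrix.of fun i j => gg K n i * u * ee K n j).map ((⇑fu)^[m])) :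
    ∀ m, 1 ≤ m →
      Pm m = (Matrix.of fun i j => gg K n i * um m * ee K n j) ∧
      Pm m * (Matrix.of fun i j => gg K n i * um' m * ee K n j) = 1 ∧
      (Matrix.of fun i j => gg K n i * um' m * ee K n j) * Pm m = 1 :=
  stmt17_general K n u u' huu' hu'u fu hfue hfug um um' hum1 humS hum'1 hum'S Pm hPm1 hPmS
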